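/- arXiv:1703.00990 — 2 statements merged into one kernel-verified Lean document; each statement's English description precedes it below -/
import Mathlib

section
/- Let p be an odd prime, and write r = p^k r_1 with p not dividing r_1 and k \geq 1. Then \sum_{d | r_1} \mu(r_1/d) \left( \binom{3 p^k d - 1}{p^k d - 1} - \binom{3 p^{k-1} d - 1}{p^{k-1} d - 1} \right) is divisible by p^{3k}. -/
/-!
Each summand is already divisible by `p ^ (3k)`. Write `N = p ^ k * d = p * n` and let `J` be the
integers in `[1, N)` prime to `p`. Removing the multiples of `p` from `(N - 1)!` and from
`(2N + 1) ⋯ (3N - 1)` gives `C(3N - 1, N - 1) * ∏_J j = C(3n - 1, n - 1) * ∏_J (2N + j)`, so it suffices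
that `P = ∏_J (2N + j)` and `Q = ∏_J j` agree modulo `p ^ (3k)`.

Pairing `j` with `N - j` gives `(2N + j)(3N - j) = j(N - j) + 6N²`, hence
`P² - Q² ≡ 6N² ∑_j ∏_{i ≠ j} i(N - i) (mod N⁴)`. Modulo `p ^ k` that sum is a unit times
`∑_J j⁻²`, which is `d` copies of `∑ u⁻²` over the units `u` of `ZMod (p ^ k)`; substituting
`u ↦ 2u` shows that this sum equals four times itself, so three times it vanishes. Thus
`p ^ (3k) ∣ P² - Q² = (P - Q)(P + Q)`, and `P + Q ≡ 2Q (mod p)` is prime to `p`.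
-/

open Finset Nat

theorem Finset.prod_erase_eq_mul_of_mul_eq_one {ι M : Type*} [CommMonoid M] [DecidableEq ι]
    {s : Finset ι} {f : ι → M} {a : ι} (ha : a ∈ s) {w : M} (hw : f a * w = 1) :
    ∏ i ∈ s.erase a, f i = (∏ i ∈ s, f i) * w := by
  rw [← mul_prod_erase s f ha, mul_right_comm, hw, one_mul]

theorem Finset.sq_dvd_prod_add_sub_prod_sub_mul_sum {ι R : Type*} [CommRing R] [DecidableEq ι]
    (s : Finset ι) (g : ι → R) (c : R) :
    c ^ 2 ∣ ∏ i ∈ s, (g i + c) - ∏ i ∈ s, g i - c * ∑ j ∈ s, ∏ i ∈ s.erase j, g i := by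
  induction s using Finset.induction_on with
  | empty => simp
  | insert a s ha ih =>
    obtain ⟨t, ht⟩ := ih
    have hsum : ∑ j ∈ insert a s, ∏ i ∈ (insert a s).erase j, g i
        = ∏ i ∈ s, g i + g a * ∑ j ∈ s, ∏ i ∈ s.erase j, g i := by
      rw [sum_insert ha, erase_insert ha, mul_sum]
      congr 1
      refine sum_congr rfl fun j hj => ?_
      rw [erase_insert_of_ne (ne_of_mem_of_not_mem hj ha).symm, prod_insert (by simp [ha])]
    rw [prod_insert ha, prod_insert ha, hsum]
    exact ⟨g a * t + ∑ j ∈ s, ∏ i ∈ s.erase j, g i + c * t, by linear_combination (g a + c) * ht⟩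

theorem prod_Ico_const_mul {M : Type*} [CommMonoid M] (a : M) (n : ℕ) (h : ℕ → M) :
    ∏ i ∈ Ico 1 n, a * h i = a ^ (n - 1) * ∏ i ∈ Ico 1 n, h i := by
  rw [prod_mul_distrib, prod_const, Nat.card_Ico]

theorem prod_Ico_eq_factorial (n : ℕ) : ∏ j ∈ Ico 1 n, j = (n - 1)! := by
  rcases n with _ | n
  · rfl
  · exact prod_Ico_id_eq_factorial n

theorem choose_mul_factorial_eq_prod_Ico (n : ℕ) :
    (3 * n - 1).choose (n - 1) * (n - 1)! = ∏ j ∈ Ico 1 n, (2 * n + j) := by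
  rcases n with _ | m
  · rfl
  · rw [prod_Ico_eq_prod_range, show 3 * (m + 1) - 1 = 2 * (m + 1) + m by omega,
      show m + 1 - 1 = m by omega, mul_comm, ← Nat.ascFactorial_eq_factorial_mul_choose,
      Nat.ascFactorial_eq_prod_range]
    exact prod_congr rfl fun i _ => by ring

theorem ZMod.sum_range_mul_natCast {M : Type*} [AddCommMonoid M] (m : ℕ) [NeZero m] (d : ℕ)
    (F : ZMod m → M) : ∑ j ∈ range (m * d), F j = d • ∑ x, F x := by
  have hblock : ∑ j ∈ range m, F j = ∑ x, F x :=
    sum_nbij' (fun j => (j : ZMod m)) ZMod.val (fun _ _ => mem_univ _)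
      (fun x _ => mem_range.mpr (ZMod.val_lt x))
      (fun j hj => ZMod.val_cast_of_lt (mem_range.mp hj)) (fun x _ => ZMod.natCast_zmod_val x)
      (fun _ _ => rfl)
  induction d with
  | zero => simp
  | succ d ih =>
    rw [mul_add_one, sum_range_add, ih, succ_nsmul, ← hblock]
    congr 1
    refine sum_congr rfl fun j _ => ?_
    rw [Nat.cast_add, Nat.cast_mul, ZMod.natCast_self, zero_mul, zero_add]

theorem ZMod.isUnit_natCast_iff_not_dvd {p k : ℕ} (hp : p.Prime) (hk : k ≠ 0) (j : ℕ) :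
    IsUnit (j : ZMod (p ^ k)) ↔ ¬ p ∣ j := by
  rw [ZMod.isUnit_iff_coprime, Nat.coprime_pow_right_iff (Nat.pos_of_ne_zero hk), Nat.coprime_comm,
    hp.coprime_iff_not_dvd]

theorem pow_sub_one_mul_sum_inverse_pow_eq_zero {R : Type*} [CommRing R] [Fintype R] {a : R}
    (ha : IsUnit a) (n : ℕ) : (a ^ n - 1) * ∑ x : R, Ring.inverse x ^ n = 0 := by
  have hscale : Ring.inverse a ^ n * ∑ x : R, Ring.inverse x ^ n = ∑ x : R, Ring.inverse x ^ n := by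
    rw [mul_sum]
    exact Fintype.sum_equiv (Units.mulLeft ha.unit) _ _ fun x => by
      simp [Ring.mul_inverse_rev, mul_pow, mul_comm]
  have hcancel : a ^ n * Ring.inverse a ^ n = 1 := by
    rw [← mul_pow, Ring.mul_inverse_cancel a ha, one_pow]
  linear_combination (-(a ^ n)) * hscale + (∑ x : R, Ring.inverse x ^ n) * hcancel

def nonMultiples (p N : ℕ) : Finset ℕ := (Ico 1 N).filter fun j => ¬ p ∣ j

theorem mem_nonMultiples {p N j : ℕ} : j ∈ nonMultiples p N ↔ (1 ≤ j ∧ j < N) ∧ ¬ p ∣ j := by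
  rw [nonMultiples, mem_filter, mem_Ico]

theorem prod_Ico_mul_eq_prod_mul_prod_nonMultiples {M : Type*} [CommMonoid M] {p : ℕ} (hp : 0 < p)
    (n : ℕ) (f : ℕ → M) :
    ∏ j ∈ Ico 1 (p * n), f j = (∏ i ∈ Ico 1 n, f (p * i)) * ∏ j ∈ nonMultiples p (p * n), f j := by
  have hmult : (Ico 1 (p * n)).filter (p ∣ ·)
      = (Ico 1 n).map ⟨(p * ·), mul_right_injective₀ hp.ne'⟩ := by
    ext j
    simp only [mem_filter, mem_Ico, mem_map, Function.Embedding.coeFn_mk]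
    constructor
    · rintro ⟨⟨h1, h2⟩, i, rfl⟩
      exact ⟨i, ⟨Nat.pos_of_ne_zero (by rintro rfl; simp at h1), Nat.lt_of_mul_lt_mul_left h2⟩, rfl⟩
    · rintro ⟨i, ⟨h1, h2⟩, rfl⟩
      exact ⟨⟨Nat.mul_pos hp h1, Nat.mul_lt_mul_of_pos_left h2 hp⟩, dvd_mul_right p i⟩
  rw [nonMultiples, ← prod_filter_mul_prod_filter_not (Ico 1 (p * n)) (p ∣ ·), hmult, prod_map]
  rfl

theorem choose_mul_prod_nonMultiples {p : ℕ} (hp : 0 < p) (n : ℕ) :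
    (3 * (p * n) - 1).choose (p * n - 1) * ∏ j ∈ nonMultiples p (p * n), j
      = (3 * n - 1).choose (n - 1) * ∏ j ∈ nonMultiples p (p * n), (2 * (p * n) + j) := by
  set J := nonMultiples p (p * n)
  have hfact : (p * n - 1)! = p ^ (n - 1) * (n - 1)! * ∏ j ∈ J, j := by
    rw [← prod_Ico_eq_factorial, prod_Ico_mul_eq_prod_mul_prod_nonMultiples hp, prod_Ico_const_mul,
      prod_Ico_eq_factorial]
  have hshift : ∏ j ∈ Ico 1 (p * n), (2 * (p * n) + j)
      = p ^ (n - 1) * ((3 * n - 1).choose (n - 1) * (n - 1)!) * ∏ j ∈ J, (2 * (p * n) + j) := by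
    rw [prod_Ico_mul_eq_prod_mul_prod_nonMultiples hp, choose_mul_factorial_eq_prod_Ico,
      ← prod_Ico_const_mul]
    congr 1
    exact prod_congr rfl fun i _ => by ring
  refine Nat.eq_of_mul_eq_mul_left (by positivity : 0 < p ^ (n - 1) * (n - 1)!) ?_
  calc p ^ (n - 1) * (n - 1)! * ((3 * (p * n) - 1).choose (p * n - 1) * ∏ j ∈ J, j)
      = (3 * (p * n) - 1).choose (p * n - 1) * (p * n - 1)! := by rw [hfact]; ring
    _ = _ := by rw [choose_mul_factorial_eq_prod_Ico, hshift]; ring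

theorem prod_nonMultiples_comp_sub {M : Type*} [CommMonoid M] {p N : ℕ} (hpN : p ∣ N) (f : ℕ → M) :
    ∏ j ∈ nonMultiples p N, f (N - j) = ∏ j ∈ nonMultiples p N, f j := by
  have hmaps : ∀ j ∈ nonMultiples p N, N - j ∈ nonMultiples p N := fun j hj => by
    rw [mem_nonMultiples] at hj ⊢
    refine ⟨by omega, fun hdvd => hj.2 ?_⟩
    simpa [Nat.sub_sub_self hj.1.2.le] using Nat.dvd_sub hpN hdvd
  have hinv : ∀ j ∈ nonMultiples p N, N - (N - j) = j := fun j hj =>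
    Nat.sub_sub_self (mem_nonMultiples.mp hj).1.2.le
  exact prod_nbij' (N - ·) (N - ·) hmaps hmaps hinv hinv fun _ _ => rfl

theorem three_mul_sum_nonMultiples_inverse_sq_eq_zero {p k : ℕ} (hp : p.Prime) (hodd : Odd p)
    (hk : k ≠ 0) (d : ℕ) :
    (3 : ZMod (p ^ k)) * ∑ j ∈ nonMultiples p (p ^ k * d), Ring.inverse (j : ZMod (p ^ k)) ^ 2
      = 0 := by
  have : NeZero (p ^ k) := ⟨pow_ne_zero k hp.ne_zero⟩
  have hsub : ∑ j ∈ nonMultiples p (p ^ k * d), Ring.inverse (j : ZMod (p ^ k)) ^ 2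
      = ∑ j ∈ range (p ^ k * d), Ring.inverse (j : ZMod (p ^ k)) ^ 2 := by
    refine sum_subset (fun j hj => mem_range.mpr (mem_nonMultiples.mp hj).1.2) fun j hj hjJ => ?_
    have hdvd : p ∣ j := by
      by_contra h
      exact hjJ (mem_nonMultiples.mpr
        ⟨⟨Nat.pos_of_ne_zero fun h0 => h (h0 ▸ dvd_zero p), mem_range.mp hj⟩, h⟩)
    rw [Ring.inverse_non_unit _ fun hu => (ZMod.isUnit_natCast_iff_not_dvd hp hk j).mp hu hdvd,
      zero_pow two_ne_zero]
  have htwo : IsUnit (2 : ZMod (p ^ k)) := by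
    exact_mod_cast (ZMod.isUnit_iff_coprime 2 (p ^ k)).mpr
      ((Nat.coprime_two_left.mpr hodd).pow_right k)
  rw [hsub, ZMod.sum_range_mul_natCast _ _ fun x => Ring.inverse x ^ 2, mul_smul_comm,
    show (3 : ZMod (p ^ k)) = 2 ^ 2 - 1 by norm_num, pow_sub_one_mul_sum_inverse_pow_eq_zero htwo,
    smul_zero]

theorem pow_dvd_three_mul_sum_prod_erase {p k : ℕ} (hp : p.Prime) (hodd : Odd p) (hk : k ≠ 0)
    (d : ℕ) :
    (p : ℤ) ^ k ∣ 3 * ∑ j ∈ nonMultiples p (p ^ k * d),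
      ∏ i ∈ (nonMultiples p (p ^ k * d)).erase j, ((i : ℤ) * ((p ^ k * d : ℕ) - i)) := by
  set J := nonMultiples p (p ^ k * d)
  have hN : (p : ZMod (p ^ k)) ^ k * d = 0 := by
    rw [← Nat.cast_pow, ZMod.natCast_self, zero_mul]
  have herase : ∀ j ∈ J, ∏ i ∈ J.erase j, ((i : ZMod (p ^ k)) * (0 - i))
      = (∏ i ∈ J, ((i : ZMod (p ^ k)) * (0 - i))) * -Ring.inverse (j : ZMod (p ^ k)) ^ 2 := by
    intro j hj
    refine prod_erase_eq_mul_of_mul_eq_one hj ?_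
    have hunit := (ZMod.isUnit_natCast_iff_not_dvd hp hk j).mpr (mem_nonMultiples.mp hj).2
    linear_combination (1 + (j : ZMod (p ^ k)) * Ring.inverse (j : ZMod (p ^ k))) *
      Ring.mul_inverse_cancel _ hunit
  rw [← Nat.cast_pow, ← ZMod.intCast_zmod_eq_zero_iff_dvd]
  push_cast
  rw [hN, sum_congr rfl herase, ← mul_sum, sum_neg_distrib]
  linear_combination (-∏ i ∈ J, ((i : ZMod (p ^ k)) * (0 - i))) *
    three_mul_sum_nonMultiples_inverse_sq_eq_zero hp hodd hk d

theorem not_dvd_prod_add_prod_nonMultiples {p N : ℕ} (hp : p.Prime) (hodd : Odd p) (hpN : p ∣ N) :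
    ¬ (p : ℤ) ∣ ∏ j ∈ nonMultiples p N, (2 * (N : ℤ) + j) + ∏ j ∈ nonMultiples p N, (j : ℤ) := by
  have : Fact p.Prime := ⟨hp⟩
  have hN : (N : ZMod p) = 0 := (ZMod.natCast_eq_zero_iff N p).mpr hpN
  have htwo : (2 : ZMod p) ≠ 0 :=
    Ring.two_ne_zero (by rw [ZMod.ringChar_zmod_n]; rintro rfl; exact absurd hodd (by decide))
  rw [← ZMod.intCast_zmod_eq_zero_iff_dvd]
  push_cast
  rw [hN, mul_zero]
  simp_rw [zero_add, ← two_mul]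
  refine mul_ne_zero htwo (prod_ne_zero_iff.mpr fun j hj => ?_)
  rw [Ne, ZMod.natCast_eq_zero_iff]
  exact (mem_nonMultiples.mp hj).2

theorem pow_three_mul_dvd_prod_add_sub_prod {p k : ℕ} (hp : p.Prime) (hodd : Odd p) (hk : k ≠ 0)
    (d : ℕ) :
    (p : ℤ) ^ (3 * k) ∣ ∏ j ∈ nonMultiples p (p ^ k * d), (2 * ((p ^ k * d : ℕ) : ℤ) + j)
      - ∏ j ∈ nonMultiples p (p ^ k * d), (j : ℤ) := by
  set N := p ^ k * d with hNdef
  set J := nonMultiples p N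
  set P := ∏ j ∈ J, (2 * (N : ℤ) + j)
  set Q := ∏ j ∈ J, (j : ℤ)
  set g : ℕ → ℤ := fun j => j * ((N : ℤ) - j)
  set c : ℤ := 6 * (N : ℤ) ^ 2
  have hpN : p ∣ N := (dvd_pow_self p hk).mul_right d
  have hNk : (p : ℤ) ^ k ∣ N := ⟨d, by rw [hNdef]; push_cast; rfl⟩
  have hsq : ∀ f : ℕ → ℤ, (∏ j ∈ J, f j) ^ 2 = ∏ j ∈ J, f j * f (N - j) := fun f => by
    rw [sq, prod_mul_distrib, prod_nonMultiples_comp_sub hpN]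
  have hP : P ^ 2 = ∏ j ∈ J, (g j + c) := by
    rw [hsq]
    refine prod_congr rfl fun j hj => ?_
    rw [Nat.cast_sub (mem_nonMultiples.mp hj).1.2.le]
    ring
  have hQ : Q ^ 2 = ∏ j ∈ J, g j := by
    rw [hsq]
    refine prod_congr rfl fun j hj => ?_
    rw [Nat.cast_sub (mem_nonMultiples.mp hj).1.2.le]
  have hc2 : (p : ℤ) ^ (3 * k) ∣ c ^ 2 := by
    refine (pow_dvd_pow _ (by omega : 3 * k ≤ k * 4)).trans ?_
    rw [pow_mul]
    exact (pow_dvd_pow_of_dvd hNk 4).trans ⟨36, by ring⟩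
  have hcB : (p : ℤ) ^ (3 * k) ∣ c * ∑ j ∈ J, ∏ i ∈ J.erase j, g i := by
    have := mul_dvd_mul (pow_dvd_pow_of_dvd hNk 2) (pow_dvd_three_mul_sum_prod_erase hp hodd hk d)
    rw [← pow_mul, ← pow_add, show k * 2 + k = 3 * k by ring] at this
    exact this.trans ⟨2, by ring⟩
  have hPQ : (p : ℤ) ^ (3 * k) ∣ (P - Q) * (P + Q) := by
    have hsplit : (P - Q) * (P + Q) = (∏ j ∈ J, (g j + c) - ∏ j ∈ J, g j
        - c * ∑ j ∈ J, ∏ i ∈ J.erase j, g i) + c * ∑ j ∈ J, ∏ i ∈ J.erase j, g i := by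
      linear_combination hP - hQ
    rw [hsplit]
    exact dvd_add (hc2.trans (sq_dvd_prod_add_sub_prod_sub_mul_sum J g c)) hcB
  exact (((Nat.prime_iff_prime_int.mp hp).coprime_iff_not_dvd.mpr
    (not_dvd_prod_add_prod_nonMultiples hp hodd hpN)).pow_left).dvd_of_dvd_mul_right hPQ

theorem pow_three_mul_dvd_choose_sub_choose {p k : ℕ} (hp : p.Prime) (hodd : Odd p) (hk : k ≠ 0)
    (d : ℕ) :
    (p : ℤ) ^ (3 * k) ∣ ((3 * p ^ k * d - 1).choose (p ^ k * d - 1) : ℤ)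
      - ((3 * p ^ (k - 1) * d - 1).choose (p ^ (k - 1) * d - 1) : ℤ) := by
  rw [mul_assoc 3, mul_assoc 3]
  set N := p ^ k * d
  set n := p ^ (k - 1) * d
  set J := nonMultiples p N
  have hid : ((3 * N - 1).choose (N - 1) : ℤ) * ∏ j ∈ J, (j : ℤ)
      = ((3 * n - 1).choose (n - 1) : ℤ) * ∏ j ∈ J, (2 * (N : ℤ) + j) := by
    have hpn : p * n = N := by rw [← mul_assoc, mul_pow_sub_one hk]
    have := congrArg (Nat.cast : ℕ → ℤ) (choose_mul_prod_nonMultiples hp.pos n)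
    rw [hpn] at this
    push_cast at this
    exact this
  have hQ : IsCoprime ((p : ℤ) ^ (3 * k)) (∏ j ∈ J, (j : ℤ)) :=
    IsCoprime.pow_left <| IsCoprime.prod_right fun j hj =>
      (Nat.prime_iff_prime_int.mp hp).coprime_iff_not_dvd.mpr
        (by exact_mod_cast (mem_nonMultiples.mp hj).2)
  refine hQ.dvd_of_dvd_mul_right ?_
  rw [show ((3 * N - 1).choose (N - 1) - (3 * n - 1).choose (n - 1) : ℤ) * ∏ j ∈ J, (j : ℤ)
      = (3 * n - 1).choose (n - 1) * (∏ j ∈ J, (2 * (N : ℤ) + j) - ∏ j ∈ J, (j : ℤ)) by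
    linear_combination hid]
  exact (pow_three_mul_dvd_prod_add_sub_prod hp hodd hk d).mul_left _

open ArithmeticFunction in
theorem stmt_3_general (p k r₁ : ℕ) (hp : p.Prime) (hpodd : Odd p) (hk : 1 ≤ k) :
    ((p : ℤ))^(3*k) ∣ ∑ d ∈ r₁.divisors, moebius (r₁ / d) *
      ((Nat.choose (3*p^k*d - 1) (p^k*d - 1) : ℤ) -
       (Nat.choose (3*p^(k-1)*d - 1) (p^(k-1)*d - 1) : ℤ)) :=
  Finset.dvd_sum fun d _ =>
    (pow_three_mul_dvd_choose_sub_choose hp hpodd (Nat.one_le_iff_ne_zero.mp hk) d).mul_left _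

open ArithmeticFunction in
theorem stmt_3 (p k r₁ : ℕ) (hp : p.Prime) (hpodd : Odd p) (hk : 1 ≤ k)
    (hr₁ : 0 < r₁) (hnd : ¬ p ∣ r₁) :
    ((p : ℤ))^(3*k) ∣ ∑ d ∈ r₁.divisors, moebius (r₁ / d) *
      ((Nat.choose (3*p^k*d - 1) (p^k*d - 1) : ℤ) -
       (Nat.choose (3*p^(k-1)*d - 1) (p^(k-1)*d - 1) : ℤ)) :=
  stmt_3_general p k r₁ hp hpodd hk
end

section
/- For every positive integer d, the 2-adic valuation of \binom{3d-1}{d-1} is never equal to 1; i.e., b(d-1) + b(d) - b(3d-1) \neq 1. -/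
/-- `b t` is the number of ones in the binary expansion of `t`. -/
def b (t : ℕ) : ℕ := (Nat.digits 2 t).sum

lemma b_two_mul_add_one (n : ℕ) : b (2*n+1) = b n + 1 := by
  unfold b
  rw [Nat.digits_def' (by norm_num : (1:ℕ) < 2) (by omega)]
  have h1 : (2*n+1) % 2 = 1 := by omega
  have h2 : (2*n+1) / 2 = n := by omega
  rw [h1, h2, List.sum_cons]
  omega

lemma b_two_mul (n : ℕ) : b (2*n) = b n := by
  rcases Nat.eq_zero_or_pos n with rfl | hn
  · rfl
  unfold b
  rw [Nat.digits_def' (by norm_num : (1:ℕ) < 2) (by omega)]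
  have h1 : (2*n) % 2 = 0 := by omega
  have h2 : (2*n) / 2 = n := by omega
  rw [h1, h2, List.sum_cons]
  omega

lemma Fkey : ∀ n : ℕ,
    ((b (3*n) : ℤ) - 2*b n ≤ 0 ∧ (b (3*n) : ℤ) - 2*b n ≠ -1) ∧
    ((b (3*n+1) : ℤ) - 2*b n ≤ 1 ∧ (b (3*n+1) : ℤ) - 2*b n ≠ 0) ∧
    ((b (3*n+2) : ℤ) - 2*b n ≤ 1) := by
  intro n
  induction n using Nat.strong_induction_on with
  | _ n ih =>
    rcases Nat.eq_zero_or_pos n with rfl | hn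
    · norm_num [b]
    obtain ⟨m, rfl | rfl⟩ := Nat.even_or_odd' n
    · -- n = 2m, m ≥ 1
      have hm : 0 < m := by omega
      have e0 : 3*(2*m) = 2*(3*m) := by ring
      have e1 : 3*(2*m)+1 = 2*(3*m)+1 := by ring
      have e2 : 3*(2*m)+2 = 2*(3*m+1) := by ring
      rw [e2, e1, e0, b_two_mul, b_two_mul_add_one, b_two_mul, b_two_mul]
      obtain ⟨⟨h1, h2⟩, ⟨h3, h4⟩, h5⟩ := ih m (by omega)
      push_cast at *
      omega
    · -- n = 2m+1
      have e0 : 3*(2*m+1) = 2*(3*m+1)+1 := by ring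
      have e1 : 3*(2*m+1)+1 = 2*(3*m+2) := by ring
      have e2 : 3*(2*m+1)+2 = 2*(3*m+2)+1 := by ring
      rw [e2, e1, e0, b_two_mul_add_one, b_two_mul, b_two_mul_add_one, b_two_mul_add_one]
      obtain ⟨⟨h1, h2⟩, ⟨h3, h4⟩, h5⟩ := ih m (by omega)
      push_cast at *
      omega

lemma f_ne_one : ∀ d : ℕ, 0 < d → (b (d-1) : ℤ) + b d - b (3*d-1) ≠ 1 := by
  intro d
  induction d using Nat.strong_induction_on with
  | _ d ih =>
    intro hd
    obtain ⟨e, rfl | rfl⟩ := Nat.even_or_odd' d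
    · -- d = 2e, e ≥ 1
      have he : 0 < e := by omega
      have e0 : 2*e - 1 = 2*(e-1)+1 := by omega
      have e1 : 3*(2*e) - 1 = 2*(3*e-1)+1 := by omega
      rw [e0, e1, b_two_mul_add_one, b_two_mul_add_one, b_two_mul]
      have h := ih e (by omega) he
      push_cast at *
      omega
    · -- d = 2e+1
      have e0 : 2*e+1-1 = 2*e := by omega
      have e1 : 3*(2*e+1)-1 = 2*(3*e+1) := by omega
      rw [e0, e1, b_two_mul, b_two_mul_add_one, b_two_mul]
      obtain ⟨_, ⟨_, h4⟩, _⟩ := Fkey e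
      push_cast at *
      omega

lemma val_fact (n : ℕ) : (padicValNat 2 (Nat.factorial n) : ℤ) = n - b n := by
  have h := sub_one_mul_padicValNat_factorial (p := 2) n
  have hle := Nat.digit_sum_le 2 n
  norm_num at h
  unfold b
  omega

theorem stmt_18 (d : ℕ) (hd : 0 < d) :
    padicValNat 2 (Nat.choose (3*d - 1) (d - 1)) ≠ 1 ∧
      (b (d - 1) : ℤ) + b d - b (3*d - 1) ≠ 1 := by
  have hk : d - 1 ≤ 3*d - 1 := by omega
  have hfact := Nat.choose_mul_factorial_mul_factorial hk
  have hsub : 3*d - 1 - (d - 1) = 2*d := by omega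
  rw [hsub] at hfact
  have hmul : padicValNat 2 (Nat.choose (3*d-1) (d-1)) +
      padicValNat 2 (Nat.factorial (d-1)) + padicValNat 2 (Nat.factorial (2*d)) =
      padicValNat 2 (Nat.factorial (3*d-1)) := by
    rw [← hfact, padicValNat.mul
        (Nat.mul_ne_zero (Nat.choose_pos hk).ne' (Nat.factorial_ne_zero _))
        (Nat.factorial_ne_zero _),
      padicValNat.mul (Nat.choose_pos hk).ne' (Nat.factorial_ne_zero _)]
  have hv : (padicValNat 2 (Nat.choose (3*d-1) (d-1)) : ℤ) =
      (b (d-1) : ℤ) + b d - b (3*d-1) := by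
    have h1 := val_fact (d-1)
    have h2 := val_fact (2*d)
    have h3 := val_fact (3*d-1)
    have hb : b (2*d) = b d := b_two_mul d
    rw [hb] at h2
    have hz : (padicValNat 2 (Nat.choose (3*d-1) (d-1)) : ℤ) +
        padicValNat 2 (Nat.factorial (d-1)) + padicValNat 2 (Nat.factorial (2*d)) =
        padicValNat 2 (Nat.factorial (3*d-1)) := by exact_mod_cast hmul
    omega
  have hne := f_ne_one d hd
  constructor
  · intro h
    rw [h] at hv
    omega
  · exact hne
end
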